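/- arXiv:2308.03765 — 4 statements merged into one kernel-verified Lean document; each statement's English description precedes it below -/
import Mathlib

section
/- For real numbers α, β, γ, δ with σ = (α+β+γ+δ)/2, one has sin α · sin β · sin γ · sin δ − sin(σ−α)·sin(σ−β)·sin(σ−γ)·sin(σ−δ) = sin σ · sin(σ−α−β) · sin(σ−α−γ) · sin(σ−β−γ). -/
/-! Pairing the factors and applying `2 sin x sin y = cos (x - y) - cos (x + y)` expresses all four
products through `A = cos (α - β)`, `B = cos (α + β)`, `C = cos (δ - γ)`, `D = cos (γ + δ)`:
the left side becomes `((A - B)(C - D) - (A - D)(C - B)) / 4` and the right side `(B - D)(A - C) / 4`,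
which agree by ring arithmetic. -/

open Real

lemma Real.sin_mul_sin_of_sub_of_add {x y p q : ℝ} (hp : x - y = p) (hq : x + y = q) :
    sin x * sin y = (cos p - cos q) / 2 := by
  rw [← hp, ← hq, ← two_mul_sin_mul_sin]
  ring

theorem stmt_4 (α β γ δ : ℝ) (σ : ℝ) (hσ : σ = (α + β + γ + δ) / 2) :
    Real.sin α * Real.sin β * Real.sin γ * Real.sin δ -
      Real.sin (σ - α) * Real.sin (σ - β) * Real.sin (σ - γ) * Real.sin (σ - δ) =
      Real.sin σ * Real.sin (σ - α - β) * Real.sin (σ - α - γ) * Real.sin (σ - β - γ) := by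
  have hαβ : sin α * sin β = (cos (α - β) - cos (α + β)) / 2 :=
    sin_mul_sin_of_sub_of_add rfl rfl
  have hγδ : sin δ * sin γ = (cos (δ - γ) - cos (γ + δ)) / 2 :=
    sin_mul_sin_of_sub_of_add rfl (add_comm δ γ)
  have hσαβ : sin (σ - β) * sin (σ - α) = (cos (α - β) - cos (γ + δ)) / 2 :=
    sin_mul_sin_of_sub_of_add (by ring) (by rw [hσ]; ring)
  have hσγδ : sin (σ - γ) * sin (σ - δ) = (cos (δ - γ) - cos (α + β)) / 2 :=
    sin_mul_sin_of_sub_of_add (by ring) (by rw [hσ]; ring)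
  have hσσαβ : sin σ * sin (σ - α - β) = (cos (α + β) - cos (γ + δ)) / 2 :=
    sin_mul_sin_of_sub_of_add (by ring) (by rw [hσ]; ring)
  have hσβγ : sin (σ - β - γ) * sin (σ - α - γ) = (cos (α - β) - cos (δ - γ)) / 2 :=
    sin_mul_sin_of_sub_of_add (by ring) (by rw [hσ]; ring)
  calc sin α * sin β * sin γ * sin δ - sin (σ - α) * sin (σ - β) * sin (σ - γ) * sin (σ - δ)
      = (sin α * sin β) * (sin δ * sin γ)
          - (sin (σ - β) * sin (σ - α)) * (sin (σ - γ) * sin (σ - δ)) := by ring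
    _ = (sin σ * sin (σ - α - β)) * (sin (σ - β - γ) * sin (σ - α - γ)) := by
      rw [hαβ, hγδ, hσαβ, hσγδ, hσσαβ, hσβγ]
      ring
    _ = sin σ * sin (σ - α - β) * sin (σ - α - γ) * sin (σ - β - γ) := by ring
end

section
/- Let α, β, γ, δ be real numbers with σ = (α+β+γ+δ)/2 and suppose cos α · cos γ = cos β · cos δ and cos β ≠ 0. Then sin(σ−β)·sin(σ−β−δ) = sin(β−α)·sin(β−γ)/(2 cos β). -/
theorem stmt_10 (α β γ δ : ℝ) (σ : ℝ) (hσ : σ = (α + β + γ + δ) / 2)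
    (h : Real.cos α * Real.cos γ = Real.cos β * Real.cos δ) (hβ : Real.cos β ≠ 0) :
    Real.sin (σ - β) * Real.sin (σ - β - δ) =
      Real.sin (β - α) * Real.sin (β - γ) / (2 * Real.cos β) := by
  have key : ∀ x y : ℝ, Real.sin x * Real.sin y
      = (Real.cos (x - y) - Real.cos (x + y)) / 2 := by
    intro x y; rw [Real.cos_sub, Real.cos_add]; ring
  rw [key, key]
  have h1 : σ - β - (σ - β - δ) = δ := by ring
  have h2 : σ - β + (σ - β - δ) = α + γ - β := by rw [hσ]; ring
  have h3 : β - α - (β - γ) = γ - α := by ring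
  have h4 : β - α + (β - γ) = 2*β - α - γ := by ring
  rw [h1, h2, h3, h4]
  field_simp
  rw [show α + γ - β = (α + γ) - β by ring, show β * 2 - α - γ = β + β - (α + γ) by ring]
  simp only [Real.cos_sub, Real.cos_add, Real.sin_add]
  linear_combination (-2 : ℝ) * h + (Real.sin α * Real.sin γ - Real.cos α * Real.cos γ) * (Real.sin_sq_add_cos_sq β)
end

section
/- Let α, β, γ, δ be real numbers with σ = (α+β+γ+δ)/2 such that cos α · cos γ = cos β · cos δ. Then sin(σ−α)·sin(σ−γ) = (1/2)(sin α · sin γ + sin β · sin δ) and likewise sin(σ−β)·sin(σ−δ) = (1/2)(sin α · sin γ + sin β · sin δ). -/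
/-! With σ the half-sum, the product-to-sum formulas give
`2 sin(σ - α) sin(σ - γ) = cos(α - γ) - cos(β + δ)`, while the hypothesis, in product-to-sum form,
says `cos(α - γ) + cos(α + γ) = cos(β - δ) + cos(β + δ)`; together these turn
`sin α sin γ + sin β sin δ` into the same difference of cosines. The second identity is the first
one after the swap `(α, γ) ↔ (β, δ)`, which fixes σ, the hypothesis and the right-hand side. -/

open Real

theorem two_mul_sin_half_sum_sub_mul_sin_half_sum_sub (α β γ δ : ℝ) :
    2 * sin ((α + β + γ + δ) / 2 - α) * sin ((α + β + γ + δ) / 2 - γ) =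
      cos (α - γ) - cos (β + δ) := by
  rw [two_mul_sin_mul_sin, ← cos_neg]
  congr 2 <;> ring

theorem sin_half_sum_sub_mul_sin_half_sum_sub_of_cos_mul_cos_eq {α β γ δ : ℝ}
    (h : cos α * cos γ = cos β * cos δ) :
    sin ((α + β + γ + δ) / 2 - α) * sin ((α + β + γ + δ) / 2 - γ) =
      1 / 2 * (sin α * sin γ + sin β * sin δ) := by
  have hαγ := two_mul_sin_mul_sin α γ
  have hβδ := two_mul_sin_mul_sin β δ
  have hcos : cos (α - γ) + cos (α + γ) = cos (β - δ) + cos (β + δ) := by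
    rw [← two_mul_cos_mul_cos, ← two_mul_cos_mul_cos, mul_assoc, mul_assoc, h]
  linarith [two_mul_sin_half_sum_sub_mul_sin_half_sum_sub α β γ δ]

theorem stmt_11 (α β γ δ : ℝ) (σ : ℝ) (hσ : σ = (α + β + γ + δ) / 2)
    (h : Real.cos α * Real.cos γ = Real.cos β * Real.cos δ) :
    Real.sin (σ - α) * Real.sin (σ - γ) =
      (1 / 2) * (Real.sin α * Real.sin γ + Real.sin β * Real.sin δ) ∧
    Real.sin (σ - β) * Real.sin (σ - δ) =
      (1 / 2) * (Real.sin α * Real.sin γ + Real.sin β * Real.sin δ) := by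
  subst hσ
  refine ⟨sin_half_sum_sub_mul_sin_half_sum_sub_of_cos_mul_cos_eq h, ?_⟩
  have hswap := sin_half_sum_sub_mul_sin_half_sum_sub_of_cos_mul_cos_eq h.symm
  rw [show β + α + δ + γ = α + β + γ + δ by ring] at hswap
  linarith
end

section
/- Suppose α, β, γ, δ ∈ (0, π) satisfy α < β+γ+δ < α+2π, β < γ+δ+α < β+2π, γ < δ+α+β < γ+2π, and δ < α+β+γ < δ+2π. Then the open intervals (|α−β|, min(α+β, 2π−α−β)) ∩ (|γ−δ|, min(γ+δ, 2π−γ−δ)) and (|β−γ|, min(β+γ, 2π−β−γ)) ∩ (|δ−α|, min(δ+α, 2π−δ−α)) are both nonempty. -/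
/-! Two open intervals meet as soon as each lower end lies below each upper end. For the
intervals of the statement, each of these eight comparisons unfolds, after splitting the
absolute value, into two of the hypotheses: the range conditions `0 < x < π` when both ends
come from the same pair of angles, and the quadrilateral inequalities otherwise. -/

open Set

theorem Set.Ioo_inter_Ioo_nonempty {α : Type*} [LinearOrder α] [DenselyOrdered α] {a b c d : α}
    (hab : a < b) (had : a < d) (hcb : c < b) (hcd : c < d) : (Ioo a b ∩ Ioo c d).Nonempty := by
  rw [Ioo_inter_Ioo, nonempty_Ioo]
  exact max_lt (lt_min hab had) (lt_min hcb hcd)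

namespace SphericalQuadrilateral

variable {c x y z w : ℝ}

lemma abs_sub_lt_min_of_mem_Ioo (hx : x ∈ Ioo 0 c) (hy : y ∈ Ioo 0 c) :
    |x - y| < min (x + y) (2 * c - x - y) := by
  obtain ⟨hx₀, hxc⟩ := hx
  obtain ⟨hy₀, hyc⟩ := hy
  refine lt_min ?_ ?_ <;> rw [abs_lt] <;> constructor <;> linarith

lemma abs_sub_lt_min_of_lt (h₁ : x < y + z + w) (h₁' : y + z + w < x + 2 * c)
    (h₂ : y < z + w + x) (h₂' : z + w + x < y + 2 * c) :
    |x - y| < min (z + w) (2 * c - z - w) := by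
  refine lt_min ?_ ?_ <;> rw [abs_lt] <;> constructor <;> linarith

theorem diagonal_Ioo_inter_nonempty {α β γ δ : ℝ}
    (hα : α ∈ Ioo 0 c) (hβ : β ∈ Ioo 0 c) (hγ : γ ∈ Ioo 0 c) (hδ : δ ∈ Ioo 0 c)
    (h1 : α < β + γ + δ) (h1' : β + γ + δ < α + 2 * c)
    (h2 : β < γ + δ + α) (h2' : γ + δ + α < β + 2 * c)
    (h3 : γ < δ + α + β) (h3' : δ + α + β < γ + 2 * c)
    (h4 : δ < α + β + γ) (h4' : α + β + γ < δ + 2 * c) :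
    (Ioo |α - β| (min (α + β) (2 * c - α - β)) ∩
      Ioo |γ - δ| (min (γ + δ) (2 * c - γ - δ))).Nonempty :=
  Ioo_inter_Ioo_nonempty (abs_sub_lt_min_of_mem_Ioo hα hβ) (abs_sub_lt_min_of_lt h1 h1' h2 h2')
    (abs_sub_lt_min_of_lt h3 h3' h4 h4') (abs_sub_lt_min_of_mem_Ioo hγ hδ)

end SphericalQuadrilateral

theorem stmt_13 (α β γ δ : ℝ)
    (hα : α ∈ Set.Ioo 0 Real.pi) (hβ : β ∈ Set.Ioo 0 Real.pi)
    (hγ : γ ∈ Set.Ioo 0 Real.pi) (hδ : δ ∈ Set.Ioo 0 Real.pi)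
    (h1 : α < β + γ + δ) (h1' : β + γ + δ < α + 2 * Real.pi)
    (h2 : β < γ + δ + α) (h2' : γ + δ + α < β + 2 * Real.pi)
    (h3 : γ < δ + α + β) (h3' : δ + α + β < γ + 2 * Real.pi)
    (h4 : δ < α + β + γ) (h4' : α + β + γ < δ + 2 * Real.pi) :
    (Set.Ioo (|α - β|) (min (α + β) (2 * Real.pi - α - β)) ∩
      Set.Ioo (|γ - δ|) (min (γ + δ) (2 * Real.pi - γ - δ))).Nonempty ∧
    (Set.Ioo (|β - γ|) (min (β + γ) (2 * Real.pi - β - γ)) ∩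
      Set.Ioo (|δ - α|) (min (δ + α) (2 * Real.pi - δ - α))).Nonempty :=
  ⟨SphericalQuadrilateral.diagonal_Ioo_inter_nonempty hα hβ hγ hδ h1 h1' h2 h2' h3 h3' h4 h4',
    SphericalQuadrilateral.diagonal_Ioo_inter_nonempty hβ hγ hδ hα h2 h2' h3 h3' h4 h4' h1 h1'⟩
end
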